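/- Let A be an n×n complex matrix of index k, let m ≥ 1 be an integer, and let X be an n×n complex matrix. The following are equivalent: (a) X = A^{#_m}; (b) AX = (A⊕)^m A^m P_{A^m} and R(X) = R(A^k); (c) AX = (A⊕)^m A^m P_{A^m} and AX^2 = X. -/

import Mathlib

open Matrix

/-- `X` is the Moore–Penrose inverse of `A` (four Penrose equations). -/
def MoorePenroseOf {n : ℕ} (A X : Matrix (Fin n) (Fin n) ℂ) : Prop :=
  A * X * A = A ∧ X * A * X = X ∧ (A * X)ᴴ = A * X ∧ (X * A)ᴴ = X * A

/-- Column space of a square complex matrix. -/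
noncomputable def colSpace {n : ℕ} (A : Matrix (Fin n) (Fin n) ℂ) : Submodule ℂ (Fin n → ℂ) :=
  LinearMap.range A.mulVecLin

/-- Null space of a square complex matrix. -/
noncomputable def nullSpace {n : ℕ} (A : Matrix (Fin n) (Fin n) ℂ) : Submodule ℂ (Fin n → ℂ) :=
  LinearMap.ker A.mulVecLin

/-- `k` is the index of `A`: the smallest nonnegative integer with
`rank(A^k) = rank(A^(k+1))`. -/
def HasIndex {n : ℕ} (A : Matrix (Fin n) (Fin n) ℂ) (k : ℕ) : Prop :=
  (A ^ k).rank = (A ^ (k + 1)).rank ∧ ∀ j < k, (A ^ j).rank ≠ (A ^ (j + 1)).rank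

/-- `X` is the core-EP inverse of `A` (where `k = Ind(A)`): `XAX = X` and
`R(X) = R(Xᴴ) = R(A^k)`. -/
def IsCoreEP {n : ℕ} (A X : Matrix (Fin n) (Fin n) ℂ) (k : ℕ) : Prop :=
  X * A * X = X ∧ colSpace X = colSpace (A ^ k) ∧ colSpace Xᴴ = colSpace (A ^ k)

/-!
Write `C = A⊕` and `P = A^m A^†`. Besides `C A C = C` and `P A^m = A^m`, two identities
drive everything: `A C² = C`, because `A C` is an idempotent whose range
`R(A^{k+1}) = R(A^k) = R(C)` contains that of `C`, and `C A^{j+1} = A^j` for `j ≥ k`, because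
`C A` is the identity on `R(C) = R(A^j)`. Since `C A` fixes every `X` with `R(X) ⊆ R(C)`, such
an `X` with `A X = C^m A^m P` equals `C (C^m A^m P) = A^{#_m}`. In (b) the range condition is
given; in (c) it holds because `X = (A X) X = C^m A^m P X` and `m ≥ 1`.
-/

section Monoid

variable {M : Type*} [Monoid M] {a c p : M} {m : ℕ}

theorem mul_pow_succ_of_mul_mul_self (h : a * c * c = c) {j : ℕ} (hj : 1 ≤ j) :
    a * c ^ (j + 1) = c ^ j := by
  obtain ⟨i, rfl⟩ := Nat.exists_eq_add_of_le' hj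
  rw [pow_succ', pow_succ', ← mul_assoc, ← mul_assoc, h]

theorem pow_mul_pow_succ_of_mul_mul_self (h : a * c * c = c) (j : ℕ) :
    a ^ j * c ^ (j + 1) = c := by
  induction j with
  | zero => simp
  | succ j ih => rw [pow_succ, mul_assoc, mul_pow_succ_of_mul_mul_self h (Nat.le_add_left 1 j), ih]

theorem pow_mul_pow_add_of_mul_pow_succ {k : ℕ} (h : ∀ j, k ≤ j → c * a ^ (j + 1) = a ^ j)
    (i : ℕ) {j : ℕ} (hj : k ≤ j) : c ^ i * a ^ (j + i) = a ^ j := by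
  induction i with
  | zero => simp
  | succ i ih => rw [pow_succ, mul_assoc, ← add_assoc, h _ (hj.trans (Nat.le_add_right j i)), ih]

theorem mul_pow_succ_mul_pow_mul_of_mul_mul_self (h : a * c * c = c) (hm : 1 ≤ m) :
    a * (c ^ (m + 1) * a ^ m * p) = c ^ m * a ^ m * p := by
  rw [← mul_assoc, ← mul_assoc, mul_pow_succ_of_mul_mul_self h hm]

theorem pow_mul_pow_mul_pow_succ_mul_pow_mul (h : a * c * c = c) (hp : p * a ^ m = a ^ m) :
    c ^ m * a ^ m * p * (c ^ (m + 1) * a ^ m * p) = c ^ (m + 1) * a ^ m * p := by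
  have hpc : p * c = c := by
    rw [← pow_mul_pow_succ_of_mul_mul_self h m, ← mul_assoc, hp]
  have hpc' : p * c ^ (m + 1) = c ^ (m + 1) := by rw [pow_succ', ← mul_assoc, hpc]
  simp only [mul_assoc]
  rw [← mul_assoc p, hpc', ← mul_assoc (a ^ m), pow_mul_pow_succ_of_mul_mul_self h m,
    ← mul_assoc (c ^ m), ← pow_succ]

theorem pow_succ_mul_pow_mul_mul_pow {k : ℕ} (h : ∀ j, k ≤ j → c * a ^ (j + 1) = a ^ j)
    (hp : p * a ^ m = a ^ m) :
    c ^ (m + 1) * a ^ m * p * a ^ (k + m + 1) = a ^ (k + m) := by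
  rw [show k + m + 1 = m + (k + 1) by omega, pow_add a m (k + 1), mul_assoc _ p, ← mul_assoc p,
    hp, mul_assoc, ← pow_add, ← pow_add, show m + (m + (k + 1)) = k + m + (m + 1) by omega,
    pow_mul_pow_add_of_mul_pow_succ h (m + 1) (Nat.le_add_right k m)]

end Monoid

section ColSpace

variable {n : ℕ}

theorem colSpace_mul (M N : Matrix (Fin n) (Fin n) ℂ) :
    colSpace (M * N) = (colSpace N).map M.mulVecLin := by
  rw [colSpace, colSpace, Matrix.mulVecLin_mul, LinearMap.range_comp]

theorem colSpace_mul_le (M N : Matrix (Fin n) (Fin n) ℂ) : colSpace (M * N) ≤ colSpace M := by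
  rw [colSpace, colSpace, Matrix.mulVecLin_mul]
  exact LinearMap.range_comp_le_range _ _

theorem colSpace_le_nullSpace_iff {M N : Matrix (Fin n) (Fin n) ℂ} :
    colSpace M ≤ nullSpace N ↔ N * M = 0 := by
  rw [colSpace, nullSpace, LinearMap.range_le_ker_iff, ← Matrix.mulVecLin_mul,
    ← Matrix.toLin'_apply', ← Matrix.toLin'.map_zero, Matrix.toLin'.injective.eq_iff]

theorem mul_eq_self_of_colSpace_le {M C Y : Matrix (Fin n) (Fin n) ℂ} (h : M * C = C)
    (hY : colSpace Y ≤ colSpace C) : M * Y = Y := by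
  have hC : colSpace C ≤ nullSpace (M - 1) := by
    rw [colSpace_le_nullSpace_iff, sub_mul, h, one_mul, sub_self]
  rw [← sub_eq_zero, ← one_mul Y, ← mul_assoc, mul_one, ← sub_mul]
  exact colSpace_le_nullSpace_iff.mp (hY.trans hC)

theorem colSpace_pow_le_pow (A : Matrix (Fin n) (Fin n) ℂ) {i j : ℕ} (h : i ≤ j) :
    colSpace (A ^ j) ≤ colSpace (A ^ i) := by
  obtain ⟨d, rfl⟩ := Nat.exists_eq_add_of_le h
  rw [pow_add]
  exact colSpace_mul_le _ _

theorem colSpace_pow_add_of_rank_eq {A : Matrix (Fin n) (Fin n) ℂ} {k : ℕ}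
    (hr : (A ^ k).rank = (A ^ (k + 1)).rank) (d : ℕ) :
    colSpace (A ^ (k + d)) = colSpace (A ^ k) := by
  have hsucc : colSpace (A ^ (k + 1)) = colSpace (A ^ k) :=
    Submodule.eq_of_le_of_finrank_le (colSpace_pow_le_pow A k.le_succ) hr.le
  induction d with
  | zero => rfl
  | succ d ih =>
    rw [← add_assoc, pow_succ', colSpace_mul, ih, ← colSpace_mul, ← pow_succ', hsucc]

theorem eq_mul_of_mul_eq_of_colSpace_le {A C V X : Matrix (Fin n) (Fin n) ℂ}
    (hC : C * A * C = C) (hX : colSpace X ≤ colSpace C) (h : A * X = V) : X = C * V := by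
  rw [← h, ← mul_assoc, mul_eq_self_of_colSpace_le hC hX]

end ColSpace

namespace IsCoreEP

variable {n k : ℕ} {A C : Matrix (Fin n) (Fin n) ℂ}

theorem mul_pow_succ (hC : IsCoreEP A C k) (hr : (A ^ k).rank = (A ^ (k + 1)).rank)
    {j : ℕ} (hj : k ≤ j) : C * A ^ (j + 1) = A ^ j := by
  obtain ⟨d, rfl⟩ := Nat.exists_eq_add_of_le hj
  rw [pow_succ', ← mul_assoc]
  exact mul_eq_self_of_colSpace_le hC.1 (by rw [colSpace_pow_add_of_rank_eq hr, hC.2.1])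

theorem mul_mul_self (hC : IsCoreEP A C k) (hr : (A ^ k).rank = (A ^ (k + 1)).rank) :
    A * C * C = C := by
  have hAC : A * C * (A * C) = A * C := by rw [mul_assoc, ← mul_assoc C, hC.1]
  refine mul_eq_self_of_colSpace_le hAC (le_of_eq ?_)
  rw [colSpace_mul, hC.2.1, ← colSpace_mul, ← pow_succ', colSpace_pow_add_of_rank_eq hr 1]

theorem colSpace_pow_succ_mul_pow_mul (hC : IsCoreEP A C k)
    (hr : (A ^ k).rank = (A ^ (k + 1)).rank) {m : ℕ} {P : Matrix (Fin n) (Fin n) ℂ}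
    (hP : P * A ^ m = A ^ m) : colSpace (C ^ (m + 1) * A ^ m * P) = colSpace (A ^ k) := by
  apply le_antisymm
  · rw [← hC.2.1, pow_succ', mul_assoc, mul_assoc]
    exact colSpace_mul_le _ _
  · calc colSpace (A ^ k) = colSpace (A ^ (k + m)) := (colSpace_pow_add_of_rank_eq hr m).symm
      _ = colSpace (C ^ (m + 1) * A ^ m * P * A ^ (k + m + 1)) := by
        rw [pow_succ_mul_pow_mul_mul_pow (fun j => hC.mul_pow_succ hr) hP]
      _ ≤ colSpace (C ^ (m + 1) * A ^ m * P) := colSpace_mul_le _ _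

end IsCoreEP

/-- equivalence of (a) `X = A^{#_m}`;
(b) `AX = (A⊕)^m A^m P_{A^m}` and `R(X) = R(A^k)`;
(c) `AX = (A⊕)^m A^m P_{A^m}` and `AX² = X`. -/
theorem stmt_14 {n k m : ℕ} (hm : 1 ≤ m)
    (A CEP AmDag X : Matrix (Fin n) (Fin n) ℂ)
    (hInd : HasIndex A k)
    (hCEP : IsCoreEP A CEP k)
    (hMP : MoorePenroseOf (A ^ m) AmDag) :
    (X = CEP ^ (m + 1) * A ^ m * (A ^ m * AmDag) ↔
      (A * X = CEP ^ m * A ^ m * (A ^ m * AmDag) ∧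
       colSpace X = colSpace (A ^ k))) ∧
    (X = CEP ^ (m + 1) * A ^ m * (A ^ m * AmDag) ↔
      (A * X = CEP ^ m * A ^ m * (A ^ m * AmDag) ∧
       A * X ^ 2 = X)) := by
  have hACC : A * CEP * CEP = CEP := hCEP.mul_mul_self hInd.1
  have hP : A ^ m * AmDag * A ^ m = A ^ m := hMP.1
  have hAW := mul_pow_succ_mul_pow_mul_of_mul_mul_self hACC hm (p := A ^ m * AmDag)
  have hVW := pow_mul_pow_mul_pow_succ_mul_pow_mul hACC hP
  have hW := hCEP.colSpace_pow_succ_mul_pow_mul hInd.1 hP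
  have hunique : ∀ {Y}, A * Y = CEP ^ m * A ^ m * (A ^ m * AmDag) →
      colSpace Y ≤ colSpace CEP → Y = CEP ^ (m + 1) * A ^ m * (A ^ m * AmDag) := fun hAY hY => by
    rw [eq_mul_of_mul_eq_of_colSpace_le hCEP.1 hY hAY, pow_succ', mul_assoc, mul_assoc, mul_assoc]
  refine ⟨⟨?_, fun ⟨hAX, hX⟩ => hunique hAX (hX.trans hCEP.2.1.symm).le⟩,
    ⟨?_, fun ⟨hAX, hAXX⟩ => hunique hAX ?_⟩⟩
  · rintro rfl
    exact ⟨hAW, hW⟩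
  · rintro rfl
    exact ⟨hAW, by rw [sq, ← mul_assoc, hAW, hVW]⟩
  · rw [← hAXX, sq, ← mul_assoc, hAX, mul_assoc, mul_assoc]
    exact (colSpace_mul_le _ _).trans (by simpa using colSpace_pow_le_pow CEP hm)
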